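/- Let k be an algebraically closed field of characteristic zero and let A ∈ z²k[[z]] have order n. If β₁ and β₂ are two formal power series of order one with A ∘ βᵢ = βᵢ ∘ zⁿ for i = 1,2, then β₂(z) = β₁(εz) for some ε ∈ k with ε^{n-1} = 1. -/

import Mathlib

/-!
Comparing coefficients of `zⁿ` in `A ∘ β = β ∘ zⁿ` gives `a b^(n-1) = 1`, where `a` is the
leading coefficient of `A` and `b = β'(0)`; so the linear coefficients of two Böttcher functions
differ by an `(n-1)`-th root of unity `ε`, and `β₁(εz)` is again a Böttcher function. Two Böttcher
functions with the same linear coefficient coincide: if their difference has order `d ≥ 2`, the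
coefficient of `z^(n-1+d)` in `A ∘ β - A ∘ γ` is `n a b^(n-1)` times the leading coefficient of
`β - γ`, nonzero in characteristic zero, whereas `(β - γ) ∘ zⁿ` has order `nd > n - 1 + d`.
-/

open PowerSeries

/-- Composition `A ∘ B` of formal power series, well defined (and agreeing with the usual
substitution) when `ord B ≥ 1`. -/
noncomputable def psComp {k : Type*} [Field k] (A B : PowerSeries k) : PowerSeries k :=
  PowerSeries.mk fun n =>
    ∑ i ∈ Finset.range (n + 1), (PowerSeries.coeff i A) * PowerSeries.coeff n (B ^ i)

section

variable {k : Type*} [Field k]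

theorem coeff_one_X_mul (u : k⟦X⟧) : coeff 1 (X * u) = constantCoeff u :=
  (coeff_succ_X_mul 0 u).trans (coeff_zero_eq_constantCoeff_apply u)

theorem coeff_psComp (A φ : k⟦X⟧) (N : ℕ) :
    coeff N (psComp A φ) = ∑ i ∈ Finset.range (N + 1), coeff i A * coeff N (φ ^ i) :=
  coeff_mk _ _

theorem sub_psComp (A B φ : k⟦X⟧) : psComp (A - B) φ = psComp A φ - psComp B φ := by
  ext N
  simp only [coeff_psComp, map_sub, sub_mul, Finset.sum_sub_distrib]

theorem rescale_psComp (c : k) (A φ : k⟦X⟧) :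
    rescale c (psComp A φ) = psComp A (rescale c φ) := by
  ext N
  simp only [coeff_rescale, coeff_psComp, ← map_pow, Finset.mul_sum]
  exact Finset.sum_congr rfl fun i _ => mul_left_comm _ _ _

theorem psComp_rescale (c : k) (A φ : k⟦X⟧) : psComp (rescale c A) φ = psComp A (C c * φ) := by
  ext N
  simp only [coeff_psComp, coeff_rescale, mul_pow, ← map_pow, coeff_C_mul, mul_assoc]
  exact Finset.sum_congr rfl fun i _ => mul_left_comm _ _ _

theorem coeff_psComp_eq_zero_of_lt {A φ : k⟦X⟧} {d e N : ℕ} (hA : ∀ i < d, coeff i A = 0)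
    (hφ : X ^ e ∣ φ) (hN : N < d * e) : coeff N (psComp A φ) = 0 := by
  rw [coeff_psComp]
  refine Finset.sum_eq_zero fun i _ => ?_
  rcases lt_or_ge i d with hi | hi
  · rw [hA i hi, zero_mul]
  · have hφi : X ^ (e * i) ∣ φ ^ i := pow_mul (X : k⟦X⟧) e i ▸ pow_dvd_pow_of_dvd hφ i
    rw [X_pow_dvd_iff.mp hφi N (by nlinarith), mul_zero]

theorem coeff_mul_psComp_X_pow (A : k⟦X⟧) {n : ℕ} (hn : n ≠ 0) (m : ℕ) :
    coeff (n * m) (psComp A (X ^ n)) = coeff m A := by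
  rw [coeff_psComp, Finset.sum_eq_single m]
  · rw [← pow_mul, coeff_X_pow_self, mul_one]
  · intro i _ hi
    rw [← pow_mul, coeff_X_pow, if_neg (mt (Nat.eq_of_mul_eq_mul_left (Nat.pos_of_ne_zero hn))
      (Ne.symm hi)), mul_zero]
  · exact fun hm => absurd (Finset.mem_range.2 (Nat.lt_succ_of_le (Nat.le_mul_of_pos_left m
      (Nat.pos_of_ne_zero hn)))) hm

theorem coeff_psComp_X_mul {A : k⟦X⟧} {n : ℕ} (hA : ∀ i < n, coeff i A = 0) (u : k⟦X⟧) :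
    coeff n (psComp A (X * u)) = coeff n A * constantCoeff u ^ n := by
  rw [coeff_psComp, Finset.sum_eq_single n]
  · rw [mul_pow, coeff_X_pow_mul', if_pos le_rfl, Nat.sub_self, coeff_zero_eq_constantCoeff_apply,
      map_pow]
  · intro i _ hne
    rcases lt_or_gt_of_ne hne with hi | hi
    · rw [hA i hi, zero_mul]
    · rw [mul_pow, coeff_X_pow_mul', if_neg (by omega), mul_zero]
  · simp

theorem X_mul_pow_sub_X_mul_pow (u v : k⟦X⟧) (i : ℕ) :
    (X * u) ^ i - (X * v) ^ i =
      X ^ (i - 1) * (X * u - X * v) * ∑ j ∈ Finset.range i, u ^ j * v ^ (i - 1 - j) := by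
  have hsum : ∑ j ∈ Finset.range i, (X * u) ^ j * (X * v) ^ (i - 1 - j) =
      X ^ (i - 1) * ∑ j ∈ Finset.range i, u ^ j * v ^ (i - 1 - j) := by
    rw [Finset.mul_sum]
    refine Finset.sum_congr rfl fun j hj => ?_
    have hji : j + (i - 1 - j) = i - 1 := by have := Finset.mem_range.1 hj; omega
    rw [mul_pow, mul_pow, mul_mul_mul_comm, ← pow_add, hji]
  rw [← geom_sum₂_mul, hsum]
  ring

theorem coeff_psComp_X_mul_sub_psComp_X_mul {A : k⟦X⟧} {n d : ℕ} (hn : n ≠ 0) (hd : d ≠ 0)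
    (hA : ∀ i < n, coeff i A = 0) {u v w : k⟦X⟧} (huv : constantCoeff u = constantCoeff v)
    (hw : X * u - X * v = X ^ d * w) :
    coeff (n - 1 + d) (psComp A (X * u) - psComp A (X * v)) =
      coeff n A * (n * constantCoeff u ^ (n - 1) * constantCoeff w) := by
  have hpow (i : ℕ) : (X * u) ^ i - (X * v) ^ i =
      X ^ (i - 1 + d) * (w * ∑ j ∈ Finset.range i, u ^ j * v ^ (i - 1 - j)) := by
    rw [X_mul_pow_sub_X_mul_pow, hw, pow_add]
    ring
  rw [map_sub, coeff_psComp, coeff_psComp, ← Finset.sum_sub_distrib]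
  simp only [← mul_sub, ← map_sub, hpow]
  rw [Finset.sum_eq_single n]
  · rw [coeff_X_pow_mul', if_pos le_rfl, Nat.sub_self, coeff_zero_eq_constantCoeff_apply, map_mul,
      map_sum]
    simp only [map_mul, map_pow, ← huv, geom_sum₂_self]
    ring
  · intro i _ hne
    rcases lt_or_gt_of_ne hne with hi | hi
    · rw [hA i hi, zero_mul]
    · rw [coeff_X_pow_mul', if_neg (by omega), mul_zero]
  · intro hn'
    exact absurd (Finset.mem_range.2 (by omega)) hn'

def IsBoettcher (A : k⟦X⟧) (n : ℕ) (β : k⟦X⟧) : Prop :=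
  β.order = 1 ∧ psComp A β = psComp β (X ^ n)

theorem exists_eq_X_mul_of_order_eq_one {φ : k⟦X⟧} (h : φ.order = 1) :
    ∃ u, φ = X * u ∧ constantCoeff u ≠ 0 := by
  obtain ⟨h1, h0⟩ := order_eq_nat.mp h
  obtain ⟨u, rfl⟩ := X_dvd_iff.mpr (by simpa using h0 0 one_pos)
  exact ⟨u, rfl, by rwa [coeff_one_X_mul] at h1⟩

theorem IsBoettcher.coeff_mul_coeff_one_pow {A β : k⟦X⟧} {n : ℕ} (hn : n ≠ 0)
    (hA : ∀ i < n, coeff i A = 0) (hβ : IsBoettcher A n β) :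
    coeff n A * coeff 1 β ^ (n - 1) = 1 := by
  obtain ⟨u, rfl, hu⟩ := exists_eq_X_mul_of_order_eq_one hβ.1
  have h := congrArg (coeff n) hβ.2
  have hlin := coeff_mul_psComp_X_pow (X * u) hn 1
  rw [mul_one] at hlin
  rw [coeff_psComp_X_mul hA, hlin] at h
  rw [coeff_one_X_mul] at h ⊢
  refine mul_right_cancel₀ hu ?_
  rw [mul_assoc, ← pow_succ, Nat.sub_add_cancel (Nat.one_le_iff_ne_zero.2 hn), h, one_mul]

theorem IsBoettcher.rescale {A β : k⟦X⟧} {n : ℕ} {ε : k} (hn : 2 ≤ n) (hε : ε ^ (n - 1) = 1)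
    (hβ : IsBoettcher A n β) : IsBoettcher A n (rescale ε β) := by
  have hε0 : ε ≠ 0 := by rintro rfl; simp [zero_pow (by omega : n - 1 ≠ 0)] at hε
  have hεn : ε ^ n = ε := by
    rw [← Nat.sub_add_cancel (by omega : 1 ≤ n), pow_succ, hε, one_mul]
  obtain ⟨h1, h0⟩ := order_eq_nat.mp hβ.1
  refine ⟨order_eq_nat.mpr ⟨?_, fun i hi => ?_⟩, ?_⟩
  · simpa [coeff_rescale] using And.intro hε0 h1
  · simp [coeff_rescale, h0 i hi]
  · rw [← rescale_psComp, hβ.2, rescale_psComp, map_pow, rescale_X, mul_pow, ← map_pow,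
      ← psComp_rescale, hεn]

theorem IsBoettcher.eq_of_coeff_one_eq [CharZero k] {A β γ : k⟦X⟧} {n : ℕ} (hn : 2 ≤ n)
    (hA : A.order = n) (hβ : IsBoettcher A n β) (hγ : IsBoettcher A n γ)
    (h1 : coeff 1 β = coeff 1 γ) : β = γ := by
  obtain ⟨hAn, hA0⟩ := order_eq_nat.mp hA
  obtain ⟨u, rfl, hu⟩ := exists_eq_X_mul_of_order_eq_one hβ.1
  obtain ⟨v, rfl, -⟩ := exists_eq_X_mul_of_order_eq_one hγ.1
  rw [coeff_one_X_mul, coeff_one_X_mul] at h1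
  rw [← sub_eq_zero]
  by_contra hδ
  obtain ⟨d, hd⟩ : ∃ d : ℕ, (X * u - X * v).order = (d : ℕ∞) := ⟨_, (coe_toNat_order hδ).symm⟩
  obtain ⟨hδd, hδlt⟩ := order_eq_nat.mp hd
  obtain ⟨w, hw⟩ := X_pow_dvd_iff.mpr hδlt
  have hw0 : constantCoeff w ≠ 0 := by
    rwa [hw, coeff_X_pow_mul', if_pos le_rfl, Nat.sub_self, coeff_zero_eq_constantCoeff_apply]
      at hδd
  have hd0 : d ≠ 0 := by rintro rfl; simp at hδd
  have hd1 : d ≠ 1 := by rintro rfl; simp [h1] at hδd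
  have hN : n - 1 + d < d * n := by
    obtain ⟨m, rfl⟩ : ∃ m, n = m + 1 := ⟨n - 1, by omega⟩
    rw [Nat.add_sub_cancel]
    nlinarith [Nat.two_le_iff d |>.mpr ⟨hd0, hd1⟩]
  have hcomp : psComp A (X * u) - psComp A (X * v) = psComp (X * u - X * v) (X ^ n) := by
    rw [hβ.2, hγ.2, sub_psComp]
  have key := congrArg (coeff (n - 1 + d)) hcomp
  rw [coeff_psComp_X_mul_sub_psComp_X_mul (by omega) hd0 hA0 h1 hw,
    coeff_psComp_eq_zero_of_lt hδlt (dvd_refl _) hN] at key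
  simp [hAn, hu, hw0] at key
  omega

end

theorem boettcher_unique_general {k : Type*} [Field k] [CharZero k]
    (A : PowerSeries k) (n : ℕ) (hn : 2 ≤ n) (hA : A.order = n)
    (β₁ β₂ : PowerSeries k) (hβ₁ : β₁.order = 1) (hβ₂ : β₂.order = 1)
    (h₁ : psComp A β₁ = psComp β₁ (PowerSeries.X ^ n))
    (h₂ : psComp A β₂ = psComp β₂ (PowerSeries.X ^ n)) :
    ∃ ε : k, ε ^ (n - 1) = 1 ∧ β₂ = PowerSeries.rescale ε β₁ := by
  have hB₁ : IsBoettcher A n β₁ := ⟨hβ₁, h₁⟩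
  have hB₂ : IsBoettcher A n β₂ := ⟨hβ₂, h₂⟩
  obtain ⟨hAn, hA0⟩ := order_eq_nat.mp hA
  have hb : coeff 1 β₁ ≠ 0 := (order_eq_nat.mp hβ₁).1
  have hrel₁ := hB₁.coeff_mul_coeff_one_pow (by omega) hA0
  have hrel₂ := hB₂.coeff_mul_coeff_one_pow (by omega) hA0
  set ε := coeff 1 β₂ / coeff 1 β₁
  have hε : ε ^ (n - 1) = 1 := by
    rw [div_pow, div_eq_one_iff_eq (pow_ne_zero _ hb)]
    exact mul_left_cancel₀ hAn (hrel₂.trans hrel₁.symm)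
  refine ⟨ε, hε, ((hB₁.rescale hn hε).eq_of_coeff_one_eq hn hA hB₂ ?_).symm⟩
  rw [coeff_rescale, pow_one, div_mul_cancel₀ _ hb]

/-- Uniqueness of Böttcher functions up to multiplication of the variable by an `(n-1)`-th root
of unity: if `β₁, β₂` are power series of order one with `A ∘ βᵢ = βᵢ ∘ zⁿ`, then
`β₂(z) = β₁(εz)` for some `ε` with `ε^(n-1) = 1`. -/
theorem boettcher_unique {k : Type*} [Field k] [IsAlgClosed k] [CharZero k]
    (A : PowerSeries k) (n : ℕ) (hn : 2 ≤ n) (hA : A.order = n)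
    (β₁ β₂ : PowerSeries k) (hβ₁ : β₁.order = 1) (hβ₂ : β₂.order = 1)
    (h₁ : psComp A β₁ = psComp β₁ (PowerSeries.X ^ n))
    (h₂ : psComp A β₂ = psComp β₂ (PowerSeries.X ^ n)) :
    ∃ ε : k, ε ^ (n - 1) = 1 ∧ β₂ = PowerSeries.rescale ε β₁ :=
  boettcher_unique_general A n hn hA β₁ β₂ hβ₁ hβ₂ h₁ h₂
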